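/- arXiv:1107.3056 — 2 statements merged into one kernel-verified Lean document; each statement's English description precedes it below -/
import Mathlib

section
/- Let I, J be two-sided ideals of a ring A and let g ∈ GL_n(A, I), e ∈ GL_n(A, J) (i.e., all entries of g−1, g⁻¹−1 lie in I and all entries of e−1, e⁻¹−1 lie in J). Then all entries of [e,g] − 1 lie in the ideal IJ + JI; that is, [GL_n(A,I), GL_n(A,J)] ⊆ GL_n(A, IJ + JI). -/
theorem congruence_commutator_mem {n : ℕ} {A : Type*} [Ring A]
    (I J : TwoSidedIdeal A) (g e : (Matrix (Fin n) (Fin n) A)ˣ)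
    (hg : ∀ p q, (g.val - 1) p q ∈ I)
    (hg' : ∀ p q, ((g⁻¹).val - 1) p q ∈ I)
    (he : ∀ p q, (e.val - 1) p q ∈ J)
    (he' : ∀ p q, ((e⁻¹).val - 1) p q ∈ J) :
    ∀ p q, ((e * g * e⁻¹ * g⁻¹).val - 1) p q ∈
      TwoSidedIdeal.span {x : A | ∃ a ∈ I, ∃ b ∈ J, x = a * b ∨ x = b * a} := by
  intro p q
  set K := TwoSidedIdeal.span {x : A | ∃ a ∈ I, ∃ b ∈ J, x = a * b ∨ x = b * a} with hK
  have h1 : e.val * (e⁻¹).val = (1 : Matrix (Fin n) (Fin n) A) := e.mul_inv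
  have h2 : g.val * (g⁻¹).val = (1 : Matrix (Fin n) (Fin n) A) := g.mul_inv
  have key : (e * g * e⁻¹ * g⁻¹).val - 1
      = ((e.val - 1) * (g.val - 1) - (g.val - 1) * (e.val - 1))
        * ((e⁻¹).val * (g⁻¹).val) := by
    have hv : (e * g * e⁻¹ * g⁻¹).val = e.val * g.val * (e⁻¹).val * (g⁻¹).val := rfl
    have expand : ((e.val - 1) * (g.val - 1) - (g.val - 1) * (e.val - 1))
        = e.val * g.val - g.val * e.val := by noncomm_ring
    rw [hv, expand, sub_mul]
    have h3 : g.val * e.val * ((e⁻¹).val * (g⁻¹).val) = 1 := by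
      calc g.val * e.val * ((e⁻¹).val * (g⁻¹).val)
          = g.val * (e.val * (e⁻¹).val) * (g⁻¹).val := by noncomm_ring
        _ = 1 := by rw [h1, mul_one, h2]
    rw [h3, ← mul_assoc]
  rw [key, Matrix.mul_apply]
  apply sum_mem
  intro k _
  apply K.mul_mem_right
  rw [Matrix.sub_apply]
  apply K.sub_mem
  · rw [Matrix.mul_apply]
    apply sum_mem
    intro k' _
    exact TwoSidedIdeal.subset_span ⟨_, hg k' k, _, he p k', Or.inr rfl⟩
  · rw [Matrix.mul_apply]
    apply sum_mem
    intro k' _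
    exact TwoSidedIdeal.subset_span ⟨_, hg p k', _, he k' k, Or.inl rfl⟩
end

section
/- For distinct indices i, j, j′ with i ≠ j, i ≠ j′, j ≠ j′, and a ∈ A, α ∈ I, β ∈ J, one has [e_{i,j′}(α), e_{i,j}(a) e_{j,i}(β) e_{i,j}(a)⁻¹] = e_{i,j}(a) e_{j,j′}(−βα) e_{i,j}(a)⁻¹. -/
/-!
Since `x` commutes with `y`, conjugation by `x` can be pulled out of the commutator, leaving
`x ⁅y, z⁆ x⁻¹`; and `⁅y, z⁆ = w` is the Steinberg relation `[e_{ij'}(α), e_{ji}(β)] = e_{jj'}(-βα)`.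
-/

open scoped commutatorElement

theorem commutatorElement_conj_right_of_commute {G : Type*} [Group G] {x y : G}
    (h : Commute x y) (z : G) : ⁅y, x * z * x⁻¹⁆ = x * ⁅y, z⁆ * x⁻¹ := by
  rw [conjugate_commutatorElement, h.eq, mul_inv_cancel_right]

theorem commutatorElement_eq_of_mul_eq {G : Type*} [Group G] {y z w : G}
    (h : y * z = w * (z * y)) : ⁅y, z⁆ = w := by
  rw [commutatorElement_def, h]
  group

namespace Matrix

variable {m R : Type*} [Fintype m] [DecidableEq m]

theorem commute_one_add_single_same_row [Semiring R] {i j k : m} (hj : j ≠ i) (hk : k ≠ i)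
    (a b : R) : Commute (1 + single i j a) (1 + single i k b) := by
  simp only [Commute, SemiconjBy, mul_add, add_mul, one_mul, mul_one,
    single_mul_single_of_ne _ _ _ _ hj, single_mul_single_of_ne _ _ _ _ hk, add_zero]
  abel

theorem one_add_single_mul_one_add_single [Ring R] {i j k : m} (hki : k ≠ i) (hkj : k ≠ j)
    (α β : R) :
    (1 + single i k α) * (1 + single j i β) =
      (1 + single j k (-(β * α))) * ((1 + single j i β) * (1 + single i k α)) := by
  rw [← single_neg]
  simp only [mul_add, add_mul, one_mul, mul_one, neg_mul, single_mul_single_same,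
    single_mul_single_of_ne _ _ _ _ hki, single_mul_single_of_ne _ _ _ _ hkj, neg_zero,
    add_zero]
  abel

end Matrix

theorem commutator_case_two_general {n : ℕ} {A : Type*} [Ring A]
    (i j j' : Fin n)
    (hij : i ≠ j) (hij' : i ≠ j') (hjj' : j ≠ j')
    (a : A) (α : A) (β : A)
    (x y z w : (Matrix (Fin n) (Fin n) A)ˣ)
    (hx : x.val = 1 + Matrix.single i j a)
    (hy : y.val = 1 + Matrix.single i j' α)
    (hz : z.val = 1 + Matrix.single j i β)
    (hw : w.val = 1 + Matrix.single j j' (-(β * α))) :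
    y * (x * z * x⁻¹) * y⁻¹ * (x * z * x⁻¹)⁻¹ = x * w * x⁻¹ := by
  have hxy : Commute x y := Commute.units_val_iff.mp <| by
    rw [hx, hy]
    exact Matrix.commute_one_add_single_same_row hij.symm hij'.symm a α
  have hyz : ⁅y, z⁆ = w := commutatorElement_eq_of_mul_eq <| Units.ext <| by
    simp only [Units.val_mul, hy, hz, hw]
    exact Matrix.one_add_single_mul_one_add_single hij'.symm hjj'.symm α β
  rw [← commutatorElement_def, commutatorElement_conj_right_of_commute hxy, hyz]

theorem commutator_case_two {n : ℕ} {A : Type*} [Ring A]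
    (I J : TwoSidedIdeal A) (i j j' : Fin n)
    (hij : i ≠ j) (hij' : i ≠ j') (hjj' : j ≠ j')
    (a : A) (α : A) (hα : α ∈ I) (β : A) (hβ : β ∈ J)
    (x y z w : (Matrix (Fin n) (Fin n) A)ˣ)
    (hx : x.val = 1 + Matrix.single i j a)
    (hy : y.val = 1 + Matrix.single i j' α)
    (hz : z.val = 1 + Matrix.single j i β)
    (hw : w.val = 1 + Matrix.single j j' (-(β * α))) :
    y * (x * z * x⁻¹) * y⁻¹ * (x * z * x⁻¹)⁻¹ = x * w * x⁻¹ :=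
  commutator_case_two_general i j j' hij hij' hjj' a α β x y z w hx hy hz hw
end
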